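/- arXiv:2510.00359 — 2 statements merged into one kernel-verified Lean document; each statement's English description precedes it below -/
import Mathlib

section
/- Let A be a symmetric positive definite m×m matrix with eigenvalues in [λ₋, λ₊], and let J be an m×m matrix with ⟨ψ, Jᵀψ⟩ ≥ (1−γ)‖ψ‖² for all ψ and ‖Jᵀ‖ ≤ 1+γ, where γ ∈ (0,1). Then for every ψ ∈ ℝ^m, ⟨ψ, Jᵀ A ψ⟩ ≥ [((λ₊+λ₋)/2)(1−γ) − ((1+γ)/2)(λ₊−λ₋)]·‖ψ‖² = (λ₋ − γλ₊)‖ψ‖². -/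
open scoped Matrix RealInnerProductSpace

/-- The spectral (operator) norm of a real matrix. -/
noncomputable def matOpNorm {p q : ℕ} (A : Matrix (Fin p) (Fin q) ℝ) : ℝ :=
  ‖LinearMap.toContinuousLinearMap (Matrix.toEuclideanLin A)‖

/-!
Write `Aψ = cψ + w` with `c = (λ₊ + λ₋)/2`. In an orthonormal eigenbasis of `A` the vector `w`
has coordinates `(λᵢ - c) ψᵢ`, so `‖w‖ ≤ ((λ₊ - λ₋)/2) ‖ψ‖`. Then
`⟨ψ, JᵀAψ⟩ = c ⟨ψ, Jᵀψ⟩ + ⟨ψ, Jᵀw⟩ ≥ c (1 - γ) ‖ψ‖² - (1 + γ) ‖w‖ ‖ψ‖` by coercivity and the norm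
bound, as long as `c ≥ 0`. This is arranged by replacing `λ₋` with `max λ₋ 0`, which is still a
lower bound for the eigenvalues because `A` is positive definite.
-/

theorem OrthonormalBasis.norm_le_mul_norm_of_repr {ι 𝕜 E : Type*} [Fintype ι] [RCLike 𝕜]
    [NormedAddCommGroup E] [InnerProductSpace 𝕜 E] (b : OrthonormalBasis ι 𝕜 E) {x y : E}
    {r : ℝ} (hr : 0 ≤ r) (h : ∀ i, ‖b.repr x i‖ ≤ r * ‖b.repr y i‖) :
    ‖x‖ ≤ r * ‖y‖ := by
  rw [← b.repr.norm_map x, ← b.repr.norm_map y, ← abs_of_nonneg hr, ← Real.norm_eq_abs,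
    ← norm_smul, EuclideanSpace.norm_eq, EuclideanSpace.norm_eq]
  gcongr with i
  simpa [norm_smul, abs_of_nonneg hr] using h i

namespace Matrix.IsHermitian

variable {𝕜 n : Type*} [RCLike 𝕜] [Fintype n] [DecidableEq n] {A : Matrix n n 𝕜}

theorem eigenvectorBasis_repr_toEuclideanLin (hA : A.IsHermitian) (x : EuclideanSpace 𝕜 n)
    (i : n) :
    hA.eigenvectorBasis.repr (toEuclideanLin A x) i =
      hA.eigenvalues i * hA.eigenvectorBasis.repr x i := by
  simp only [eigenvectorBasis, eigenvalues, eigenvalues₀, OrthonormalBasis.repr_reindex]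
  exact LinearMap.IsSymmetric.eigenvectorBasis_apply_self_apply _ _ _ _

theorem norm_toEuclideanLin_sub_smul_le (hA : A.IsHermitian) {c r : ℝ} (hr : 0 ≤ r)
    (h : ∀ i, |hA.eigenvalues i - c| ≤ r) (x : EuclideanSpace 𝕜 n) :
    ‖toEuclideanLin A x - (c : 𝕜) • x‖ ≤ r * ‖x‖ := by
  refine hA.eigenvectorBasis.norm_le_mul_norm_of_repr hr fun i => ?_
  rw [map_sub, map_smul, PiLp.sub_apply, PiLp.smul_apply, eigenvectorBasis_repr_toEuclideanLin,
    smul_eq_mul, ← sub_mul, norm_mul, ← RCLike.ofReal_sub, RCLike.norm_ofReal]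
  gcongr
  exact h i

end Matrix.IsHermitian

theorem le_inner_apply_of_norm_sub_smul_le {E : Type*} [NormedAddCommGroup E]
    [InnerProductSpace ℝ E] {T : E →L[ℝ] E} {α β c r : ℝ} {ψ v : E} (hc : 0 ≤ c)
    (hα : α * ‖ψ‖ ^ 2 ≤ ⟪ψ, T ψ⟫) (hT : ‖T‖ ≤ β) (hv : ‖v - c • ψ‖ ≤ r * ‖ψ‖) :
    (c * α - β * r) * ‖ψ‖ ^ 2 ≤ ⟪ψ, T v⟫ := by
  have hsplit : ⟪ψ, T v⟫ = c * ⟪ψ, T ψ⟫ + ⟪ψ, T (v - c • ψ)⟫ := by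
    rw [map_sub, map_smul, inner_sub_right, real_inner_smul_right]
    ring
  have hβ : 0 ≤ β := (norm_nonneg T).trans hT
  have hrest : |⟪ψ, T (v - c • ψ)⟫| ≤ β * r * ‖ψ‖ ^ 2 :=
    calc |⟪ψ, T (v - c • ψ)⟫| ≤ ‖ψ‖ * (‖T‖ * ‖v - c • ψ‖) :=
          (abs_real_inner_le_norm _ _).trans (by gcongr; exact T.le_opNorm _)
      _ ≤ ‖ψ‖ * (β * (r * ‖ψ‖)) := by gcongr
      _ = β * r * ‖ψ‖ ^ 2 := by ring
  nlinarith [mul_le_mul_of_nonneg_left hα hc, neg_abs_le ⟪ψ, T (v - c • ψ)⟫]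

theorem stmt8_general {m : ℕ} (A J : Matrix (Fin m) (Fin m) ℝ) (hA : A.PosDef)
    (lamMinus lamPlus : ℝ)
    (hlam : ∀ i, lamMinus ≤ hA.1.eigenvalues i ∧ hA.1.eigenvalues i ≤ lamPlus)
    (γ : ℝ)
    (hcoer : ∀ ψ : EuclideanSpace ℝ (Fin m),
      (1 - γ) * ‖ψ‖ ^ 2 ≤ ⟪ψ, Matrix.toEuclideanLin Jᵀ ψ⟫)
    (hnorm : matOpNorm Jᵀ ≤ 1 + γ) :
    ∀ ψ : EuclideanSpace ℝ (Fin m),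
      (((lamPlus + lamMinus) / 2) * (1 - γ) - ((1 + γ) / 2) * (lamPlus - lamMinus)) * ‖ψ‖ ^ 2
        ≤ ⟪ψ, Matrix.toEuclideanLin (Jᵀ * A) ψ⟫ ∧
      ((lamPlus + lamMinus) / 2) * (1 - γ) - ((1 + γ) / 2) * (lamPlus - lamMinus)
        = lamMinus - γ * lamPlus := by
  intro ψ
  refine ⟨?_, by ring⟩
  rcases isEmpty_or_nonempty (Fin m) with hm | ⟨⟨i₀⟩⟩
  · simp [Subsingleton.elim ψ 0]
  set μ := max lamMinus 0
  have hμ : ∀ i, μ ≤ hA.1.eigenvalues i := fun i => max_le (hlam i).1 (hA.eigenvalues_pos i).le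
  have hshift : ‖Matrix.toEuclideanLin A ψ - ((lamPlus + μ) / 2) • ψ‖ ≤ (lamPlus - μ) / 2 * ‖ψ‖ :=
    hA.1.norm_toEuclideanLin_sub_smul_le (c := (lamPlus + μ) / 2) (by linarith [hμ i₀, (hlam i₀).2])
      (fun i => abs_le.2 ⟨by linarith [hμ i], by linarith [(hlam i).2]⟩) ψ
  have hbound := le_inner_apply_of_norm_sub_smul_le
    (T := LinearMap.toContinuousLinearMap (Matrix.toEuclideanLin Jᵀ))
    (by linarith [hμ i₀, (hlam i₀).2, le_max_right lamMinus 0]) (hcoer ψ) hnorm hshift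
  rw [Matrix.toLpLin_mul_same]
  calc _ = (lamMinus - γ * lamPlus) * ‖ψ‖ ^ 2 := by ring
    _ ≤ (μ - γ * lamPlus) * ‖ψ‖ ^ 2 := by gcongr; exact le_max_left _ _
    _ = _ := by ring
    _ ≤ _ := hbound

/-- Let `A` be symmetric positive definite with eigenvalues in `[λ₋, λ₊]`, and
let `J` satisfy `⟨ψ, Jᵀψ⟩ ≥ (1−γ)‖ψ‖²` for all `ψ` and `‖Jᵀ‖ ≤ 1+γ` with `γ ∈ (0,1)`.
Then `⟨ψ, Jᵀ A ψ⟩ ≥ [((λ₊+λ₋)/2)(1−γ) − ((1+γ)/2)(λ₊−λ₋)]·‖ψ‖² = (λ₋ − γλ₊)‖ψ‖²`. -/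
theorem stmt8 {m : ℕ} (A J : Matrix (Fin m) (Fin m) ℝ) (hA : A.PosDef)
    (lamMinus lamPlus : ℝ)
    (hlam : ∀ i, lamMinus ≤ hA.1.eigenvalues i ∧ hA.1.eigenvalues i ≤ lamPlus)
    (γ : ℝ) (hγ0 : 0 < γ) (hγ1 : γ < 1)
    (hcoer : ∀ ψ : EuclideanSpace ℝ (Fin m),
      (1 - γ) * ‖ψ‖ ^ 2 ≤ ⟪ψ, Matrix.toEuclideanLin Jᵀ ψ⟫)
    (hnorm : matOpNorm Jᵀ ≤ 1 + γ) :
    ∀ ψ : EuclideanSpace ℝ (Fin m),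
      (((lamPlus + lamMinus) / 2) * (1 - γ) - ((1 + γ) / 2) * (lamPlus - lamMinus)) * ‖ψ‖ ^ 2
        ≤ ⟪ψ, Matrix.toEuclideanLin (Jᵀ * A) ψ⟫ ∧
      ((lamPlus + lamMinus) / 2) * (1 - γ) - ((1 + γ) / 2) * (lamPlus - lamMinus)
        = lamMinus - γ * lamPlus :=
  stmt8_general A J hA lamMinus lamPlus hlam γ hcoer hnorm
end

section
/- Let M ∈ ℝ^{p×m} have singular values in [√(γ/β), 1/√β], let J = I − DS with ‖DS‖_op ≤ γ ∈ (0,1), and let h ∈ ℝ^m with ‖h‖ ≥ η > 0. Define v = Mᵀ J⁻ᵀ h and w = Mᵀ h. Then ⟨v, w⟩ ≥ ‖M v‖²·(λ₋ − γλ₊), where λ₋ and λ₊ are lower and upper bounds on the eigenvalues of (M Mᵀ)⁻¹; in particular if λ₋ − γλ₊ > 0 then ⟨v, w⟩ ≥ (γη/(β(1+γ)))²·(λ₋ − γλ₊) > 0. -/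
open scoped Matrix

/-- The Euclidean norm of a vector in `ℝ^k`. -/
noncomputable def vecNorm {k : ℕ} (x : Fin k → ℝ) : ℝ := Real.sqrt (x ⬝ᵥ x)

/-- Smallest singular value: square root of the smallest eigenvalue of `M * Mᴴ`. -/
noncomputable def sigmaMin {p q : ℕ} (M : Matrix (Fin p) (Fin q) ℝ) : ℝ :=
  Real.sqrt (⨅ i, (Matrix.isHermitian_mul_conjTranspose_self M).eigenvalues i)

/-- Largest singular value: square root of the largest eigenvalue of `M * Mᴴ`. -/
noncomputable def sigmaMax {p q : ℕ} (M : Matrix (Fin p) (Fin q) ℝ) : ℝ :=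
  Real.sqrt (⨆ i, (Matrix.isHermitian_mul_conjTranspose_self M).eigenvalues i)

/-! With `u = J⁻ᵀ h` and `z = M v = (M Mᵀ) u` we get `⟨v, w⟩ = ⟨z, Jᵀ (M Mᵀ)⁻¹ z⟩
= ⟨z, (M Mᵀ)⁻¹ z⟩ - ⟨DS z, (M Mᵀ)⁻¹ z⟩`. In an orthonormal eigenbasis of `(M Mᵀ)⁻¹` the first
term is at least `λ₋ ‖z‖²`, and by Cauchy–Schwarz the second is at most `γ λ₊ ‖z‖²`.
For the explicit bound, `‖h‖ = ‖Jᵀ u‖ ≤ (1 + γ) ‖u‖`, while every eigenvalue of `M Mᵀ` is at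
least `σ_min² ≥ γ / β`, so `‖z‖ ≥ (γ / β) ‖u‖ ≥ γ η / (β (1 + γ))`. -/

open Matrix
open scoped Matrix.Norms.L2Operator

lemma dotProduct_eq_inner_toLp {n : Type*} [Fintype n] (x y : n → ℝ) :
    x ⬝ᵥ y = inner ℝ (WithLp.toLp 2 x) (WithLp.toLp 2 y) := by
  simp [EuclideanSpace.inner_eq_star_dotProduct, dotProduct_comm]

section VecNorm

variable {k : ℕ}

lemma vecNorm_eq_norm_toLp (x : Fin k → ℝ) : vecNorm x = ‖WithLp.toLp 2 x‖ := by
  rw [EuclideanSpace.norm_eq, vecNorm, dotProduct]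
  simp [Real.norm_eq_abs, sq]

lemma vecNorm_nonneg (x : Fin k → ℝ) : 0 ≤ vecNorm x := Real.sqrt_nonneg _

lemma vecNorm_sq (x : Fin k → ℝ) : vecNorm x ^ 2 = x ⬝ᵥ x := by
  rw [vecNorm_eq_norm_toLp, dotProduct_eq_inner_toLp, real_inner_self_eq_norm_sq]

lemma dotProduct_le_vecNorm_mul_vecNorm (x y : Fin k → ℝ) : x ⬝ᵥ y ≤ vecNorm x * vecNorm y := by
  rw [dotProduct_eq_inner_toLp, vecNorm_eq_norm_toLp, vecNorm_eq_norm_toLp]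
  exact real_inner_le_norm _ _

lemma vecNorm_sub_le (x y : Fin k → ℝ) : vecNorm (x - y) ≤ vecNorm x + vecNorm y := by
  simp only [vecNorm_eq_norm_toLp, WithLp.toLp_sub]
  exact norm_sub_le _ _

end VecNorm

section OpNorm

variable {p q : ℕ}

lemma matOpNorm_eq_norm (A : Matrix (Fin p) (Fin q) ℝ) : matOpNorm A = ‖A‖ := rfl

lemma vecNorm_mulVec_le (A : Matrix (Fin p) (Fin q) ℝ) (x : Fin q → ℝ) :
    vecNorm (A *ᵥ x) ≤ matOpNorm A * vecNorm x := by
  rw [matOpNorm_eq_norm]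
  simpa [vecNorm_eq_norm_toLp] using l2_opNorm_mulVec A (WithLp.toLp 2 x)

lemma matOpNorm_transpose (A : Matrix (Fin p) (Fin q) ℝ) : matOpNorm Aᵀ = matOpNorm A := by
  rw [matOpNorm_eq_norm, matOpNorm_eq_norm, ← conjTranspose_eq_transpose_of_trivial,
    l2_opNorm_conjTranspose]

lemma isUnit_one_sub_of_matOpNorm_lt_one {D : Matrix (Fin p) (Fin p) ℝ} (hD : matOpNorm D < 1) :
    IsUnit (1 - D) :=
  (Units.oneSub D hD).isUnit

lemma vecNorm_one_sub_transpose_mulVec_le {D : Matrix (Fin p) (Fin p) ℝ} {γ : ℝ}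
    (hD : matOpNorm D ≤ γ) (x : Fin p → ℝ) :
    vecNorm ((1 - D)ᵀ *ᵥ x) ≤ (1 + γ) * vecNorm x := by
  rw [transpose_sub, transpose_one, sub_mulVec, one_mulVec]
  have hDx := vecNorm_mulVec_le Dᵀ x
  rw [matOpNorm_transpose] at hDx
  linarith [vecNorm_sub_le x (Dᵀ *ᵥ x), mul_le_mul_of_nonneg_right hD (vecNorm_nonneg x)]

end OpNorm

namespace OrthonormalBasis

variable {n : Type*} [Fintype n]

lemma dotProduct_eq_sum_repr (b : OrthonormalBasis n ℝ (EuclideanSpace ℝ n)) (x y : n → ℝ) :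
    x ⬝ᵥ y = ∑ i, b.repr (WithLp.toLp 2 x) i * b.repr (WithLp.toLp 2 y) i := by
  rw [dotProduct_eq_inner_toLp, ← b.repr.inner_map_map, PiLp.inner_apply]
  simp [mul_comm]

end OrthonormalBasis

namespace Matrix.IsHermitian

section

variable {n : Type*} [Fintype n] [DecidableEq n] {B : Matrix n n ℝ} (hB : B.IsHermitian)

lemma eigenvectorBasis_repr_mulVec (x : n → ℝ) (i : n) :
    hB.eigenvectorBasis.repr (WithLp.toLp 2 (B *ᵥ x)) i =
      hB.eigenvalues i * hB.eigenvectorBasis.repr (WithLp.toLp 2 x) i := by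
  simp only [OrthonormalBasis.repr_apply_apply, EuclideanSpace.inner_eq_star_dotProduct,
    star_trivial]
  rw [dotProduct_comm, dotProduct_mulVec, ← mulVec_transpose,
    ← conjTranspose_eq_transpose_of_trivial, hB.eq, mulVec_eigenvectorBasis, smul_dotProduct,
    smul_eq_mul, dotProduct_comm]

end

section Fin

variable {k : ℕ} {B : Matrix (Fin k) (Fin k) ℝ} (hB : B.IsHermitian)

lemma mul_vecNorm_sq_le_dotProduct_mulVec {a : ℝ} (ha : ∀ i, a ≤ hB.eigenvalues i)
    (x : Fin k → ℝ) : a * vecNorm x ^ 2 ≤ x ⬝ᵥ (B *ᵥ x) := by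
  simp only [vecNorm_sq, hB.eigenvectorBasis.dotProduct_eq_sum_repr,
    hB.eigenvectorBasis_repr_mulVec, Finset.mul_sum]
  refine Finset.sum_le_sum fun i _ => ?_
  nlinarith [ha i, mul_self_nonneg (hB.eigenvectorBasis.repr (WithLp.toLp 2 x) i)]

lemma vecNorm_mulVec_sq_le {b : ℝ} (hb : ∀ i, |hB.eigenvalues i| ≤ b) (x : Fin k → ℝ) :
    vecNorm (B *ᵥ x) ^ 2 ≤ b ^ 2 * vecNorm x ^ 2 := by
  simp only [vecNorm_sq, hB.eigenvectorBasis.dotProduct_eq_sum_repr,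
    hB.eigenvectorBasis_repr_mulVec, Finset.mul_sum]
  refine Finset.sum_le_sum fun i _ => ?_
  have : hB.eigenvalues i ^ 2 ≤ b ^ 2 := sq_le_sq' (abs_le.mp (hb i)).1 (abs_le.mp (hb i)).2
  nlinarith [mul_self_nonneg (hB.eigenvectorBasis.repr (WithLp.toLp 2 x) i)]

lemma vecNorm_mulVec_le_of_abs_eigenvalues_le {b : ℝ} (hb : ∀ i, |hB.eigenvalues i| ≤ b)
    (x : Fin k → ℝ) : vecNorm (B *ᵥ x) ≤ b * vecNorm x := by
  -- `b` can be negative only when `Fin k` is empty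
  rcases isEmpty_or_nonempty (Fin k) with hk | ⟨⟨i⟩⟩
  · simp [Subsingleton.elim x 0, vecNorm]
  · have hb0 : 0 ≤ b := (abs_nonneg _).trans (hb i)
    refine le_of_pow_le_pow_left₀ two_ne_zero (mul_nonneg hb0 (vecNorm_nonneg x)) ?_
    rw [mul_pow]
    exact hB.vecNorm_mulVec_sq_le hb x

lemma mul_vecNorm_le_vecNorm_mulVec {a : ℝ} (ha0 : 0 ≤ a) (ha : ∀ i, a ≤ hB.eigenvalues i)
    (x : Fin k → ℝ) : a * vecNorm x ≤ vecNorm (B *ᵥ x) := by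
  refine le_of_pow_le_pow_left₀ two_ne_zero (vecNorm_nonneg _) ?_
  simp only [mul_pow, vecNorm_sq, hB.eigenvectorBasis.dotProduct_eq_sum_repr,
    hB.eigenvectorBasis_repr_mulVec, Finset.mul_sum]
  refine Finset.sum_le_sum fun i _ => ?_
  have : a ^ 2 ≤ hB.eigenvalues i ^ 2 := pow_le_pow_left₀ ha0 (ha i) 2
  nlinarith [mul_self_nonneg (hB.eigenvectorBasis.repr (WithLp.toLp 2 x) i)]

lemma vecNorm_sq_mul_le_dotProduct_one_sub_transpose_mulVec {D : Matrix (Fin k) (Fin k) ℝ}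
    {lamMinus lamPlus γ : ℝ}
    (hlo : ∀ i, lamMinus ≤ hB.eigenvalues i) (hhi : ∀ i, |hB.eigenvalues i| ≤ lamPlus)
    (hD : matOpNorm D ≤ γ) (z : Fin k → ℝ) :
    vecNorm z ^ 2 * (lamMinus - γ * lamPlus) ≤ z ⬝ᵥ ((1 - D)ᵀ *ᵥ (B *ᵥ z)) := by
  have hγ : 0 ≤ γ := (norm_nonneg D).trans hD
  have hquad := hB.mul_vecNorm_sq_le_dotProduct_mulVec hlo z
  have hcross : (D *ᵥ z) ⬝ᵥ (B *ᵥ z) ≤ γ * lamPlus * vecNorm z ^ 2 :=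
    calc (D *ᵥ z) ⬝ᵥ (B *ᵥ z) ≤ vecNorm (D *ᵥ z) * vecNorm (B *ᵥ z) :=
          dotProduct_le_vecNorm_mul_vecNorm _ _
      _ ≤ (γ * vecNorm z) * (lamPlus * vecNorm z) :=
          mul_le_mul ((vecNorm_mulVec_le D z).trans (by gcongr; exact vecNorm_nonneg z))
            (hB.vecNorm_mulVec_le_of_abs_eigenvalues_le hhi z) (vecNorm_nonneg _)
            (mul_nonneg hγ (vecNorm_nonneg z))
      _ = γ * lamPlus * vecNorm z ^ 2 := by ring
  have hsplit : z ⬝ᵥ ((1 - D)ᵀ *ᵥ (B *ᵥ z)) = z ⬝ᵥ (B *ᵥ z) - (D *ᵥ z) ⬝ᵥ (B *ᵥ z) := by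
    rw [transpose_sub, transpose_one, sub_mulVec, one_mulVec, dotProduct_sub, mulVec_transpose,
      dotProduct_comm z ((B *ᵥ z) ᵥ* D), ← dotProduct_mulVec, dotProduct_comm (B *ᵥ z)]
  rw [hsplit]
  linarith

end Fin

end Matrix.IsHermitian

lemma le_eigenvalues_of_sqrt_le_sigmaMin {p q : ℕ} (M : Matrix (Fin p) (Fin q) ℝ) {c : ℝ}
    (hc : 0 < c) (hM : Real.sqrt c ≤ sigmaMin M) (i : Fin p) :
    c ≤ (isHermitian_mul_conjTranspose_self M).eigenvalues i :=
  ((Real.sqrt_le_sqrt_iff' hc).mp hM).trans (ciInf_le (Set.finite_range _).bddBelow i)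

lemma transpose_mulVec_dotProduct_transpose_mulVec {p q : ℕ} (M : Matrix (Fin p) (Fin q) ℝ)
    (x y : Fin p → ℝ) : (Mᵀ *ᵥ x) ⬝ᵥ (Mᵀ *ᵥ y) = ((M * Mᵀ) *ᵥ x) ⬝ᵥ y := by
  rw [dotProduct_mulVec, ← mulVec_mulVec, vecMul_transpose]

lemma posDef_mul_transpose_of_sqrt_le_sigmaMin {p q : ℕ} (M : Matrix (Fin p) (Fin q) ℝ) {c : ℝ}
    (hc : 0 < c) (hM : Real.sqrt c ≤ sigmaMin M) : (M * Mᵀ).PosDef := by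
  rw [← conjTranspose_eq_transpose_of_trivial]
  exact (isHermitian_mul_conjTranspose_self M).posDef_iff_eigenvalues_pos.mpr fun i =>
    hc.trans_le (le_eigenvalues_of_sqrt_le_sigmaMin M hc hM i)

lemma mul_vecNorm_le_vecNorm_mul_transpose_mulVec {p q : ℕ} (M : Matrix (Fin p) (Fin q) ℝ)
    {c : ℝ} (hc : 0 < c) (hM : Real.sqrt c ≤ sigmaMin M) (x : Fin p → ℝ) :
    c * vecNorm x ≤ vecNorm ((M * Mᵀ) *ᵥ x) := by
  rw [← conjTranspose_eq_transpose_of_trivial]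
  exact (isHermitian_mul_conjTranspose_self M).mul_vecNorm_le_vecNorm_mulVec hc.le
    (le_eigenvalues_of_sqrt_le_sigmaMin M hc hM) x

theorem stmt12_general {p m : ℕ} (M : Matrix (Fin p) (Fin m) ℝ)
    (β γ η : ℝ) (hβ : 0 < β) (hγ0 : 0 < γ) (hγ1 : γ < 1) (hη : 0 < η)
    (hσmin : Real.sqrt (γ / β) ≤ sigmaMin M)
    (DS : Matrix (Fin p) (Fin p) ℝ) (hDS : matOpNorm DS ≤ γ)
    (J : Matrix (Fin p) (Fin p) ℝ) (hJ : J = 1 - DS)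
    (h : Fin p → ℝ) (hh : η ≤ vecNorm h)
    (hherm : ((M * Mᵀ)⁻¹).IsHermitian) (lamMinus lamPlus : ℝ)
    (hlam : ∀ i, lamMinus ≤ hherm.eigenvalues i ∧ hherm.eigenvalues i ≤ lamPlus) :
    let v : Fin m → ℝ := Mᵀ *ᵥ ((J⁻¹)ᵀ *ᵥ h)
    let w : Fin m → ℝ := Mᵀ *ᵥ h
    vecNorm (M *ᵥ v) ^ 2 * (lamMinus - γ * lamPlus) ≤ v ⬝ᵥ w ∧
    (0 < lamMinus - γ * lamPlus →
      (γ * η / (β * (1 + γ))) ^ 2 * (lamMinus - γ * lamPlus) ≤ v ⬝ᵥ w ∧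
      0 < (γ * η / (β * (1 + γ))) ^ 2 * (lamMinus - γ * lamPlus)) := by
  intro v w
  have hγβ : 0 < γ / β := div_pos hγ0 hβ
  have hA : (M * Mᵀ).PosDef := posDef_mul_transpose_of_sqrt_le_sigmaMin M hγβ hσmin
  have hJdet : IsUnit J.det :=
    (isUnit_iff_isUnit_det J).mp (hJ ▸ isUnit_one_sub_of_matOpNorm_lt_one (hDS.trans_lt hγ1))
  set u := (J⁻¹)ᵀ *ᵥ h
  have hJu : Jᵀ *ᵥ u = h := by
    rw [mulVec_mulVec, ← transpose_mul, nonsing_inv_mul J hJdet, transpose_one, one_mulVec]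
  have hMv : M *ᵥ v = (M * Mᵀ) *ᵥ u := mulVec_mulVec _ _ _
  have hu : (M * Mᵀ)⁻¹ *ᵥ (M *ᵥ v) = u := by
    rw [hMv, mulVec_mulVec, nonsing_inv_mul _ ((isUnit_iff_isUnit_det _).mp hA.isUnit),
      one_mulVec]
  have hvw : v ⬝ᵥ w = (M *ᵥ v) ⬝ᵥ ((1 - DS)ᵀ *ᵥ ((M * Mᵀ)⁻¹ *ᵥ (M *ᵥ v))) := by
    rw [hu, ← hJ, hJu, hMv]
    exact transpose_mulVec_dotProduct_transpose_mulVec M u h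
  have hbound : vecNorm (M *ᵥ v) ^ 2 * (lamMinus - γ * lamPlus) ≤ v ⬝ᵥ w :=
    hvw ▸ hherm.vecNorm_sq_mul_le_dotProduct_one_sub_transpose_mulVec (fun i => (hlam i).1)
      (fun i => (abs_of_pos (hA.inv.eigenvalues_pos i)).trans_le (hlam i).2) hDS _
  have hu_lower : η ≤ (1 + γ) * vecNorm u :=
    hh.trans (hJu ▸ hJ ▸ vecNorm_one_sub_transpose_mulVec_le hDS u)
  have hMv_lower : γ * η / (β * (1 + γ)) ≤ vecNorm (M *ᵥ v) :=
    calc γ * η / (β * (1 + γ)) = γ / β * (η / (1 + γ)) := by field_simp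
      _ ≤ γ / β * vecNorm u := by
          gcongr
          rwa [div_le_iff₀ (by positivity), mul_comm]
      _ ≤ vecNorm (M *ᵥ v) := hMv ▸ mul_vecNorm_le_vecNorm_mul_transpose_mulVec M hγβ hσmin u
  refine ⟨hbound, fun hc => ⟨?_, mul_pos (by positivity) hc⟩⟩
  calc (γ * η / (β * (1 + γ))) ^ 2 * (lamMinus - γ * lamPlus)
      ≤ vecNorm (M *ᵥ v) ^ 2 * (lamMinus - γ * lamPlus) := by gcongr
    _ ≤ v ⬝ᵥ w := hbound

/-- Let `M` have singular values in `[√(γ/β), 1/√β]`, `J = I − DS` with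
`‖DS‖_op ≤ γ ∈ (0,1)`, and `‖h‖ ≥ η > 0`. With `v = Mᵀ J⁻ᵀ h` and `w = Mᵀ h`, we have
`⟨v, w⟩ ≥ ‖M v‖²·(λ₋ − γλ₊)` where `λ₋`, `λ₊` bound the eigenvalues of `(M Mᵀ)⁻¹` from
below and above; in particular if `λ₋ − γλ₊ > 0` then
`⟨v, w⟩ ≥ (γη/(β(1+γ)))²·(λ₋ − γλ₊) > 0`. -/
theorem stmt12 {p m : ℕ} (M : Matrix (Fin p) (Fin m) ℝ) (hrank : M.rank = p)
    (β γ η : ℝ) (hβ : 0 < β) (hγ0 : 0 < γ) (hγ1 : γ < 1) (hη : 0 < η)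
    (hσmin : Real.sqrt (γ / β) ≤ sigmaMin M) (hσmax : sigmaMax M ≤ 1 / Real.sqrt β)
    (DS : Matrix (Fin p) (Fin p) ℝ) (hDS : matOpNorm DS ≤ γ)
    (J : Matrix (Fin p) (Fin p) ℝ) (hJ : J = 1 - DS)
    (h : Fin p → ℝ) (hh : η ≤ vecNorm h)
    (hherm : ((M * Mᵀ)⁻¹).IsHermitian) (lamMinus lamPlus : ℝ)
    (hlam : ∀ i, lamMinus ≤ hherm.eigenvalues i ∧ hherm.eigenvalues i ≤ lamPlus) :
    let v : Fin m → ℝ := Mᵀ *ᵥ ((J⁻¹)ᵀ *ᵥ h)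
    let w : Fin m → ℝ := Mᵀ *ᵥ h
    vecNorm (M *ᵥ v) ^ 2 * (lamMinus - γ * lamPlus) ≤ v ⬝ᵥ w ∧
    (0 < lamMinus - γ * lamPlus →
      (γ * η / (β * (1 + γ))) ^ 2 * (lamMinus - γ * lamPlus) ≤ v ⬝ᵥ w ∧
      0 < (γ * η / (β * (1 + γ))) ^ 2 * (lamMinus - γ * lamPlus)) :=
  stmt12_general M β γ η hβ hγ0 hγ1 hη hσmin DS hDS J hJ h hh hherm lamMinus lamPlus hlam
end
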